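/- arXiv:1109.1397 — 5 statements merged into one kernel-verified Lean document; each statement's English description precedes it below -/
import Mathlib

section
/- Let h : A → B be a unital *-homomorphism between unital C*-algebras with B ≠ 0, and suppose the induced map C(h) : C(A) → C(B) on posets of commutative unital C*-subalgebras is an order embedding. Then h is injective. -/
/-- The poset of commutative unital C*-subalgebras of a unital C*-algebra `A`. -/
def CommCStarSub (A : Type*) [CStarAlgebra A] : Type _ :=
  {S : StarSubalgebra ℂ A // IsClosed (S : Set A) ∧ ∀ x ∈ S, ∀ y ∈ S, x * y = y * x}

lemma bot_isClosed {A : Type*} [CStarAlgebra A] :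
    IsClosed ((⊥ : StarSubalgebra ℂ A) : Set A) := by
  have : ((⊥ : StarSubalgebra ℂ A) : Set A) = ((Submodule.span ℂ {(1 : A)}) : Set A) := by
    ext x
    simp only [SetLike.mem_coe, StarSubalgebra.mem_bot, Submodule.mem_span_singleton]
    constructor
    · rintro ⟨r, rfl⟩; exact ⟨r, (Algebra.algebraMap_eq_smul_one r).symm⟩
    · rintro ⟨r, rfl⟩; exact ⟨r, Algebra.algebraMap_eq_smul_one r⟩
  rw [this]
  exact Submodule.closed_of_finiteDimensional _

/-- If `B ≠ 0` and the induced map `C(h) : C(A) → C(B)` is an order embedding,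
then the unital *-homomorphism `h` is injective. -/
theorem stmt_2 {A B : Type*} [CStarAlgebra A] [CStarAlgebra B] [Nontrivial B]
    (h : A →⋆ₐ[ℂ] B)
    (H : ∀ C₁ C₂ : CommCStarSub A, C₁.1.map h ≤ C₂.1.map h ↔ C₁.1 ≤ C₂.1) :
    Function.Injective h := by
  have hcont : Continuous h :=
    AddMonoidHomClass.continuous_of_bound h 1
      (by simpa only [one_mul] using NonUnitalStarAlgHom.norm_apply_le h)
  -- key : self-adjoint elements in the kernel vanish
  have key : ∀ x : A, IsSelfAdjoint x → h x = 0 → x = 0 := by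
    intro x hx hx0
    haveI : IsStarNormal x := hx.isStarNormal
    set C₁ : CommCStarSub A :=
      ⟨StarAlgebra.elemental ℂ x, StarAlgebra.elemental.isClosed ℂ x, by
        intro a ha b hb
        have := mul_comm (⟨a, ha⟩ : StarAlgebra.elemental ℂ x) ⟨b, hb⟩
        exact congrArg Subtype.val this⟩
    set C₂ : CommCStarSub A :=
      ⟨⊥, bot_isClosed, by
        rintro a ⟨r, rfl⟩ b ⟨s, rfl⟩
        rw [← map_mul, ← map_mul, mul_comm]⟩
    have hle : C₁.1.map h ≤ C₂.1.map h := by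
      rintro b ⟨a, ha, rfl⟩
      have h1 : h a ∈ (⊥ : StarSubalgebra ℂ B) := by
        have hsub : (h '' (StarAlgebra.elemental ℂ x : Set A)) ⊆
            ((⊥ : StarSubalgebra ℂ B) : Set B) := by
          have : h '' closure ((StarAlgebra.adjoin ℂ {x} : StarSubalgebra ℂ A) : Set A) ⊆
              closure (h '' ((StarAlgebra.adjoin ℂ {x} : StarSubalgebra ℂ A) : Set A)) :=
            image_closure_subset_closure_image hcont
          refine this.trans ?_
          rw [← bot_isClosed.closure_eq]
          refine closure_mono ?_
          rintro b ⟨a, ha, rfl⟩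
          have : a ∈ StarAlgebra.adjoin ℂ ({x} : Set A) := ha
          have hmap : h a ∈ (StarAlgebra.adjoin ℂ ({x} : Set A)).map h :=
            ⟨a, ha, rfl⟩
          rw [StarAlgHom.map_adjoin] at hmap
          simp only [Set.image_singleton, hx0] at hmap
          have hbot : StarAlgebra.adjoin ℂ ({(0 : B)} : Set B) ≤ ⊥ := by
            rw [StarAlgebra.adjoin_le_iff]
            intro y hy
            simp only [Set.mem_singleton_iff] at hy
            subst hy
            exact ⟨0, map_zero _⟩
          exact hbot hmap
        exact hsub ⟨a, ha, rfl⟩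
      obtain ⟨r, hr⟩ := h1
      exact ⟨algebraMap ℂ A r, ⟨r, rfl⟩, (h.commutes r).trans hr⟩
    have hx_bot : x ∈ (⊥ : StarSubalgebra ℂ A) :=
      (H C₁ C₂).mp hle (StarAlgebra.elemental.self_mem ℂ x)
    obtain ⟨r, hr⟩ := hx_bot
    have hz : algebraMap ℂ B r = 0 := by
      calc algebraMap ℂ B r = h (algebraMap ℂ A r) := (h.commutes r).symm
      _ = h x := congrArg h hr
      _ = 0 := hx0
    have hr0 : r = 0 := by
      have hinj : Function.Injective (algebraMap ℂ B) := (algebraMap ℂ B).injective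
      exact hinj (by simpa using hz)
    rw [← hr, hr0, map_zero]
  intro a b hab
  have hab0 : h (a - b) = 0 := by rw [map_sub, hab, sub_self]
  set c := a - b with hc
  suffices hcz : c = 0 by
    have := sub_eq_zero.mp hcz; exact this
  have h1 : h (c + star c) = 0 := by
    rw [map_add, map_star, hab0, star_zero, add_zero]
  have h2 : h (Complex.I • (star c - c)) = 0 := by
    rw [map_smul, map_sub, map_star, hab0, star_zero, sub_zero, smul_zero]
  have k1 : c + star c = 0 := key _ (by
    rw [IsSelfAdjoint, star_add, star_star, add_comm]) h1
  have k2 : Complex.I • (star c - c) = 0 := key _ (by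
    rw [IsSelfAdjoint, star_smul, star_sub, star_star, Complex.star_def, Complex.conj_I,
      neg_smul, ← smul_neg, neg_sub]) h2
  have k2' : star c - c = 0 := by
    have := smul_eq_zero.mp k2
    rcases this with hI | h0
    · exact absurd hI Complex.I_ne_zero
    · exact h0
  have : star c = c := sub_eq_zero.mp k2'
  have : (2 : ℂ) • c = 0 := by
    rw [two_smul]
    calc c + c = c + star c := by rw [this]
    _ = 0 := k1
  have := smul_eq_zero.mp this
  rcases this with h2' | h0
  · norm_num at h2'
  · exact h0
end

section
/- Let h : A → B be a unital *-homomorphism between unital C*-algebras. If the induced map C(h) : C(A) → C(B) on posets of commutative unital C*-subalgebras is surjective, then h is surjective. -/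
lemma normal_mem_range {A B : Type*} [CStarAlgebra A] [CStarAlgebra B]
    (h : A →⋆ₐ[ℂ] B)
    (H : ∀ D : CommCStarSub B, ∃ C : CommCStarSub A, C.1.map h = D.1)
    (b : B) (hb : IsStarNormal b) : b ∈ Set.range h := by
  let D : CommCStarSub B :=
    ⟨StarAlgebra.elemental ℂ b, StarAlgebra.elemental.isClosed ℂ b, by
      intro x hx y hy
      have := mul_comm (⟨x, hx⟩ : StarAlgebra.elemental ℂ b) ⟨y, hy⟩
      exact congrArg Subtype.val this⟩
  obtain ⟨C, hC⟩ := H D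
  have hbD : b ∈ D.1 := StarAlgebra.elemental.self_mem ℂ b
  rw [← hC] at hbD
  obtain ⟨a, -, ha⟩ := hbD
  exact ⟨a, ha⟩

/-- If the induced map `C(h) : C(A) → C(B)` on posets of commutative unital
C*-subalgebras is surjective, then `h` is surjective. -/
theorem stmt_3 {A B : Type*} [CStarAlgebra A] [CStarAlgebra B]
    (h : A →⋆ₐ[ℂ] B)
    (H : ∀ D : CommCStarSub B, ∃ C : CommCStarSub A, C.1.map h = D.1) :
    Function.Surjective h := by
  intro b
  set re : B := (2⁻¹ : ℂ) • (b + star b) with hre_def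
  set im : B := (2⁻¹ : ℂ) • (b - star b) with him_def
  have hre_sa : IsSelfAdjoint re := by
    rw [IsSelfAdjoint, hre_def, star_smul, star_add, star_star]
    simp [add_comm]
  have him_star : star im = -im := by
    rw [him_def, star_smul, star_sub, star_star]
    simp [smul_sub]
  have hre_n : IsStarNormal re := hre_sa.isStarNormal
  have him_n : IsStarNormal im := ⟨by
    rw [Commute, SemiconjBy, him_star]
    simp [mul_neg, neg_mul]⟩
  obtain ⟨a1, ha1⟩ := normal_mem_range h H re hre_n
  obtain ⟨a2, ha2⟩ := normal_mem_range h H im him_n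
  refine ⟨a1 + a2, ?_⟩
  rw [map_add, ha1, ha2, hre_def, him_def, ← smul_add]
  rw [show b + star b + (b - star b) = (2 : ℂ) • b by module]
  rw [smul_smul]
  norm_num
end

section
/- A unital *-homomorphism h : A → B between unital C*-algebras reflects commutativity (i.e. h(x)h(y) = h(y)h(x) implies xy = yx) if and only if the induced monotone map C(h) : C(A) → C(B) between posets of commutative unital C*-subalgebras has a right adjoint (equivalently, forms a Galois connection with some monotone map C(B) → C(A)). -/
instance (A : Type*) [CStarAlgebra A] : PartialOrder (CommCStarSub A) :=
  Subtype.partialOrder _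

open scoped ComplexStarModule CStarAlgebra

theorem mul_comm_of_map_mul_comm {A B F : Type*} [NonUnitalNormedRing A] [StarRing A]
    [CStarRing A] [NonUnitalRing B] [StarRing B] [FunLike F A B] [NonUnitalRingHomClass F A B]
    [StarHomClass F A B] (f : F) (hcentral : ∀ k, f k = 0 → ∀ a, Commute k a) {x y : A}
    (hxy : f x * f y = f y * f x) : x * y = y * x := by
  set z := x * y - y * x
  have hz : f (star z) = 0 := by
    rw [map_star, map_sub, map_mul, map_mul, hxy, sub_self, star_zero]
  have hzy : f (star z * y) = 0 := by rw [map_mul, hz, zero_mul]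
  have hzz : star z * z = 0 :=
    calc star z * z = x * (star z * y) - star z * y * x := by
          rw [mul_sub, ← mul_assoc, (hcentral _ hz x).eq, mul_assoc, mul_assoc]
      _ = 0 := sub_eq_zero.2 (hcentral _ hzy x).symm.eq
  exact sub_eq_zero.1 (CStarRing.star_mul_self_eq_zero_iff z |>.1 hzz)

theorem commute_of_forall_isSelfAdjoint {A : Type*} [Ring A] [StarRing A] [Algebra ℂ A]
    [StarModule ℂ A] {x : A} (hx : ∀ t : A, IsSelfAdjoint t → Commute x t) (y : A) :
    Commute x y := by
  rw [← realPart_add_I_smul_imaginaryPart y]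
  exact (hx _ (ℜ y).2).add_right ((hx _ (ℑ y).2).smul_right Complex.I)

namespace CommCStarSub

variable {A B : Type*} [CStarAlgebra A] [CStarAlgebra B]

def comap (h : A →⋆ₐ[ℂ] B) (hrefl : ∀ x y : A, h x * h y = h y * h x → x * y = y * x)
    (D : CommCStarSub B) : CommCStarSub A :=
  ⟨D.1.comap h, D.2.1.preimage (map_continuous h),
    fun x hx y hy => hrefl x y (D.2.2 _ hx _ hy)⟩

def elemental (a : A) [IsStarNormal a] : CommCStarSub A :=
  ⟨StarAlgebra.elemental ℂ a, StarAlgebra.elemental.isClosed ℂ a,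
    fun x hx y hy => congrArg Subtype.val
      (mul_comm (⟨x, hx⟩ : StarAlgebra.elemental ℂ a) ⟨y, hy⟩)⟩

def IsRightAdjoint (h : A →⋆ₐ[ℂ] B) (R : CommCStarSub B → CommCStarSub A) : Prop :=
  ∀ (C : CommCStarSub A) (D : CommCStarSub B), C.1.map h ≤ D.1 ↔ C.1 ≤ (R D).1

theorem map_elemental_le_iff (h : A →⋆ₐ[ℂ] B) (a : A) [IsStarNormal a] (D : CommCStarSub B) :
    (elemental a).1.map h ≤ D.1 ↔ h a ∈ D.1 := by
  rw [StarSubalgebra.map_le_iff_le_comap]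
  exact StarAlgebra.elemental.le_iff_mem (D.2.1.preimage (map_continuous h))

end CommCStarSub

section RightAdjoint

variable {A B : Type*} [CStarAlgebra A] [CStarAlgebra B] {h : A →⋆ₐ[ℂ] B}
  {R : CommCStarSub B → CommCStarSub A}

theorem mem_rightAdjoint_of_map_mem (hR : CommCStarSub.IsRightAdjoint h R)
    {a : A} [IsStarNormal a] {D : CommCStarSub B} (ha : h a ∈ D.1) : a ∈ (R D).1 :=
  (hR _ D).1 ((CommCStarSub.map_elemental_le_iff h a D).2 ha)
    (StarAlgebra.elemental.self_mem ℂ a)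

theorem commute_of_map_eq_zero_of_isStarNormal (hR : CommCStarSub.IsRightAdjoint h R)
    {k a : A} [IsStarNormal k] [IsStarNormal a] (hk : h k = 0) : Commute k a :=
  (R (.elemental (h a))).2.2 k (mem_rightAdjoint_of_map_mem hR (hk ▸ zero_mem _))
    a (mem_rightAdjoint_of_map_mem hR (StarAlgebra.elemental.self_mem ℂ (h a)))

theorem commute_of_map_eq_zero (hR : CommCStarSub.IsRightAdjoint h R) {k : A} (hk : h k = 0)
    (a : A) : Commute k a := by
  have hsa : ∀ s : A, IsSelfAdjoint s → h s = 0 → Commute s a := fun s hs hs0 =>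
    commute_of_forall_isSelfAdjoint (fun t ht =>
      have := hs.isStarNormal
      have := ht.isStarNormal
      commute_of_map_eq_zero_of_isStarNormal hR hs0) a
  rw [← realPart_add_I_smul_imaginaryPart k]
  exact (hsa _ (ℜ k).2 (by simp [map_realPart, hk])).add_left
    ((hsa _ (ℑ k).2 (by simp [map_imaginaryPart, hk])).smul_left Complex.I)

end RightAdjoint

/-- A unital *-homomorphism reflects commutativity iff the induced monotone map
`C(h) : C(A) → C(B)` has a right adjoint (forms a Galois connection with some
monotone map `C(B) → C(A)`). -/
theorem stmt_4 {A B : Type*} [CStarAlgebra A] [CStarAlgebra B]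
    (h : A →⋆ₐ[ℂ] B) :
    (∀ x y : A, h x * h y = h y * h x → x * y = y * x) ↔
      (∃ R : CommCStarSub B → CommCStarSub A, Monotone R ∧
        ∀ (C : CommCStarSub A) (D : CommCStarSub B),
          (C.1.map h ≤ D.1 ↔ C.1 ≤ (R D).1)) := by
  constructor
  · intro hrefl
    exact ⟨CommCStarSub.comap h hrefl, fun _ _ hD => StarSubalgebra.comap_mono hD,
      fun _ _ => StarSubalgebra.map_le_iff_le_comap⟩
  · rintro ⟨R, -, hR⟩ x y hxy
    exact mul_comm_of_map_mul_comm h (fun _ hk => commute_of_map_eq_zero hR hk) hxy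
end

section
/- Let A₁ and A₂ be unital *-subalgebras of a unital *-algebra A. Then A₁ and A₂ mutually commute in A (every element of A₁ commutes with every element of A₂) if and only if the monotone map r : C(A) → C(A₁) × C(A₂), C ↦ (C ∩ A₁, C ∩ A₂), has a left adjoint, and in that case the left adjoint sends (C₁, C₂) to the subalgebra of A generated by C₁ ∪ C₂. -/
variable (A : Type*) [Ring A] [Algebra ℂ A] [StarRing A] [StarModule ℂ A]

/-- The poset of commutative unital *-subalgebras of a unital *-algebra `A`. -/
def CommSub : Type _ :=
  {S : StarSubalgebra ℂ A // ∀ x ∈ S, ∀ y ∈ S, x * y = y * x}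

instance : PartialOrder (CommSub A) := Subtype.partialOrder _

variable {A}

/-- The poset of commutative unital *-subalgebras of `A` contained in a given
unital *-subalgebra `A₁` (i.e. the poset `C(A₁)`). -/
def CommSubIn (A₁ : StarSubalgebra ℂ A) : Type _ :=
  {S : CommSub A // S.1 ≤ A₁}

instance (A₁ : StarSubalgebra ℂ A) : PartialOrder (CommSubIn A₁) := Subtype.partialOrder _

/-- The restriction map `r : C(A) → C(A₁) × C(A₂)`, `C ↦ (C ∩ A₁, C ∩ A₂)`. -/
def restrictMap (A₁ A₂ : StarSubalgebra ℂ A) :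
    CommSub A → CommSubIn A₁ × CommSubIn A₂ := fun C =>
  (⟨⟨C.1 ⊓ A₁, fun x hx y hy =>
      C.2 x (StarSubalgebra.mem_inf.mp hx).1 y (StarSubalgebra.mem_inf.mp hy).1⟩,
    inf_le_right⟩,
   ⟨⟨C.1 ⊓ A₂, fun x hx y hy =>
      C.2 x (StarSubalgebra.mem_inf.mp hx).1 y (StarSubalgebra.mem_inf.mp hy).1⟩,
    inf_le_right⟩)

lemma sup_comm_aux {A₁ A₂ C₁ C₂ : StarSubalgebra ℂ A}
    (h : ∀ x ∈ A₁, ∀ y ∈ A₂, x * y = y * x) (h₁ : C₁ ≤ A₁) (h₂ : C₂ ≤ A₂)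
    (hc₁ : ∀ x ∈ C₁, ∀ y ∈ C₁, x * y = y * x)
    (hc₂ : ∀ x ∈ C₂, ∀ y ∈ C₂, x * y = y * x) :
    ∀ x ∈ C₁ ⊔ C₂, ∀ y ∈ C₁ ⊔ C₂, x * y = y * x := by
  have step1 : C₁ ⊔ C₂ ≤ StarSubalgebra.centralizer ℂ ((C₁ : Set A) ∪ C₂) := by
    refine sup_le ?_ ?_ <;> intro z hz <;>
      rw [StarSubalgebra.mem_centralizer_iff] <;> rintro g (hg | hg)
    · exact ⟨hc₁ g hg z hz, hc₁ (star g) (star_mem hg) z hz⟩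
    · exact ⟨(h z (h₁ hz) g (h₂ hg)).symm, (h z (h₁ hz) (star g) (h₂ (star_mem hg))).symm⟩
    · exact ⟨h g (h₁ hg) z (h₂ hz), h (star g) (h₁ (star_mem hg)) z (h₂ hz)⟩
    · exact ⟨hc₂ g hg z hz, hc₂ (star g) (star_mem hg) z hz⟩
  have step2 : C₁ ⊔ C₂ ≤
      StarSubalgebra.centralizer ℂ ((C₁ ⊔ C₂ : StarSubalgebra ℂ A) : Set A) := by
    refine sup_le ?_ ?_ <;> intro c hc <;> rw [StarSubalgebra.mem_centralizer_iff] <;>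
      intro g hg
    · exact ⟨((StarSubalgebra.mem_centralizer_iff ℂ).mp (step1 hg) c (Or.inl hc)).1.symm,
        ((StarSubalgebra.mem_centralizer_iff ℂ).mp (step1 (star_mem hg)) c (Or.inl hc)).1.symm⟩
    · exact ⟨((StarSubalgebra.mem_centralizer_iff ℂ).mp (step1 hg) c (Or.inr hc)).1.symm,
        ((StarSubalgebra.mem_centralizer_iff ℂ).mp (step1 (star_mem hg)) c (Or.inr hc)).1.symm⟩
  intro x hx y hy
  exact ((StarSubalgebra.mem_centralizer_iff ℂ).mp (step2 hy) x hx).1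

/-- The explicit left adjoint, when `A₁` and `A₂` mutually commute. -/
def joinMap {A₁ A₂ : StarSubalgebra ℂ A} (h : ∀ x ∈ A₁, ∀ y ∈ A₂, x * y = y * x) :
    CommSubIn A₁ × CommSubIn A₂ → CommSub A := fun p =>
  ⟨p.1.1.1 ⊔ p.2.1.1, sup_comm_aux h p.1.2 p.2.2 p.1.1.2 p.2.1.2⟩

lemma joinMap_gc {A₁ A₂ : StarSubalgebra ℂ A} (h : ∀ x ∈ A₁, ∀ y ∈ A₂, x * y = y * x) :
    GaloisConnection (joinMap h) (restrictMap A₁ A₂) := by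
  intro p C
  constructor
  · intro hle
    have hle' : p.1.1.1 ⊔ p.2.1.1 ≤ C.1 := hle
    exact ⟨show p.1.1.1 ≤ C.1 ⊓ A₁ from le_inf (le_sup_left.trans hle') p.1.2,
      show p.2.1.1 ≤ C.1 ⊓ A₂ from le_inf (le_sup_right.trans hle') p.2.2⟩
  · rintro ⟨h1, h2⟩
    have h1' : p.1.1.1 ≤ C.1 ⊓ A₁ := h1
    have h2' : p.2.1.1 ≤ C.1 ⊓ A₂ := h2
    exact show p.1.1.1 ⊔ p.2.1.1 ≤ C.1 from
      sup_le (h1'.trans inf_le_left) (h2'.trans inf_le_left)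

lemma adjoin_singleton_comm (a : A) (ha : IsSelfAdjoint a) :
    ∀ x ∈ StarAlgebra.adjoin ℂ ({a} : Set A), ∀ y ∈ StarAlgebra.adjoin ℂ ({a} : Set A),
      x * y = y * x := by
  haveI : IsStarNormal a := ha.isStarNormal
  intro x hx y hy
  exact congrArg Subtype.val
    (mul_comm (⟨x, hx⟩ : StarAlgebra.adjoin ℂ ({a} : Set A)) ⟨y, hy⟩)

/-- `A₁` and `A₂` mutually commute in `A` iff the restriction map
`r : C(A) → C(A₁) × C(A₂)` has a left adjoint; in that case the left adjoint sends
`(C₁, C₂)` to the subalgebra of `A` generated by `C₁ ∪ C₂`. -/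
theorem stmt_13 (A₁ A₂ : StarSubalgebra ℂ A) :
    ((∀ x ∈ A₁, ∀ y ∈ A₂, x * y = y * x) ↔
      ∃ L : CommSubIn A₁ × CommSubIn A₂ → CommSub A,
        GaloisConnection L (restrictMap A₁ A₂)) ∧
    ((∀ x ∈ A₁, ∀ y ∈ A₂, x * y = y * x) →
      ∀ L : CommSubIn A₁ × CommSubIn A₂ → CommSub A,
        GaloisConnection L (restrictMap A₁ A₂) →
          ∀ p : CommSubIn A₁ × CommSubIn A₂, (L p).1 = p.1.1.1 ⊔ p.2.1.1) := by
  constructor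
  · constructor
    · intro h
      exact ⟨joinMap h, joinMap_gc h⟩
    · rintro ⟨L, gc⟩
      -- self-adjoint elements commute
      have hsa : ∀ a ∈ A₁, ∀ b ∈ A₂, IsSelfAdjoint a → IsSelfAdjoint b → a * b = b * a := by
        intro a ha b hb hsa hsb
        set C₁ : CommSubIn A₁ :=
          ⟨⟨StarAlgebra.adjoin ℂ ({a} : Set A), adjoin_singleton_comm a hsa⟩,
            StarAlgebra.adjoin_le_iff.mpr (Set.singleton_subset_iff.mpr ha)⟩
        set C₂ : CommSubIn A₂ :=
          ⟨⟨StarAlgebra.adjoin ℂ ({b} : Set A), adjoin_singleton_comm b hsb⟩,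
            StarAlgebra.adjoin_le_iff.mpr (Set.singleton_subset_iff.mpr hb)⟩
        have hle := gc.le_u_l (C₁, C₂)
        have h1 : C₁.1.1 ≤ (L (C₁, C₂)).1 ⊓ A₁ := hle.1
        have h2 : C₂.1.1 ≤ (L (C₁, C₂)).1 ⊓ A₂ := hle.2
        have haD : a ∈ (L (C₁, C₂)).1 :=
          (h1 (StarAlgebra.self_mem_adjoin_singleton ℂ a)).1
        have hbD : b ∈ (L (C₁, C₂)).1 :=
          (h2 (StarAlgebra.self_mem_adjoin_singleton ℂ b)).1
        exact (L (C₁, C₂)).2 a haD b hbD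
      intro x hx y hy
      -- self-adjoint parts
      have im_sa : ∀ z : A, IsSelfAdjoint (Complex.I • (z - star z)) := by
        intro z
        rw [IsSelfAdjoint, star_smul, Complex.star_def, Complex.conj_I, star_sub, star_star,
          neg_smul, ← smul_neg, neg_sub]
      have re_sa : ∀ z : A, IsSelfAdjoint (z + star z) := fun z =>
        IsSelfAdjoint.add_star_self z
      have mem_im : ∀ (S : StarSubalgebra ℂ A) (z : A), z ∈ S →
          Complex.I • (z - star z) ∈ S := fun S z hz =>
        SMulMemClass.smul_mem _ (sub_mem hz (star_mem hz))
      have mem_re : ∀ (S : StarSubalgebra ℂ A) (z : A), z ∈ S → z + star z ∈ S :=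
        fun S z hz => add_mem hz (star_mem hz)
      have key : ∀ z : A,
          (1 / 2 : ℂ) • ((z + star z) + (-Complex.I) • (Complex.I • (z - star z))) = z := by
        intro z
        rw [smul_smul, neg_mul, Complex.I_mul_I, neg_neg, one_smul]
        rw [show (z + star z) + (z - star z) = (2 : ℂ) • z by
          rw [two_smul]; abel]
        rw [smul_smul]
        norm_num
      have cxy : Commute x y := by
        have c11 : Commute (x + star x) (y + star y) :=
          hsa _ (mem_re A₁ x hx) _ (mem_re A₂ y hy) (re_sa x) (re_sa y)
        have c12 : Commute (x + star x) (Complex.I • (y - star y)) :=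
          hsa _ (mem_re A₁ x hx) _ (mem_im A₂ y hy) (re_sa x) (im_sa y)
        have c21 : Commute (Complex.I • (x - star x)) (y + star y) :=
          hsa _ (mem_im A₁ x hx) _ (mem_re A₂ y hy) (im_sa x) (re_sa y)
        have c22 : Commute (Complex.I • (x - star x)) (Complex.I • (y - star y)) :=
          hsa _ (mem_im A₁ x hx) _ (mem_im A₂ y hy) (im_sa x) (im_sa y)
        have := ((c11.add_right (c12.smul_right (-Complex.I))).add_left
          ((c21.add_right (c22.smul_right (-Complex.I))).smul_left (-Complex.I))).smul_left
            ((1 / 2 : ℂ))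
        have := (this.smul_right ((1 / 2 : ℂ)))
        rwa [key x, key y] at this
      exact cxy
  · intro h L gc p
    have : L p = joinMap h p := gc.l_unique (joinMap_gc h) (fun _ => rfl)
    rw [this]
    rfl
end

section
/- Given an adjoint triple f ⊣ g ⊣ h between categories (f, h : C → D, g : D → C), the functor f is fully faithful if and only if h is fully faithful. -/
open CategoryTheory

lemma CategoryTheory.Functor.full_and_faithful_iff_nonempty_fullyFaithful
    {C : Type*} {D : Type*} [Category C] [Category D] (F : C ⥤ D) :
    (F.Full ∧ F.Faithful) ↔ Nonempty F.FullyFaithful :=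
  ⟨fun ⟨_, _⟩ => ⟨.ofFullyFaithful F⟩, fun ⟨hF⟩ => ⟨hF.full, hF.faithful⟩⟩

/-- Given an adjoint triple `f ⊣ g ⊣ h` with `f, h : C ⥤ D` and `g : D ⥤ C`,
the functor `f` is fully faithful iff `h` is fully faithful. -/
theorem stmt_17 {C : Type u₁} {D : Type u₂} [Category.{v₁} C] [Category.{v₂} D]
    (f : C ⥤ D) (g : D ⥤ C) (h : C ⥤ D)
    (adj₁ : f ⊣ g) (adj₂ : g ⊣ h) :
    (f.Full ∧ f.Faithful) ↔ (h.Full ∧ h.Faithful) := by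
  simp only [Functor.full_and_faithful_iff_nonempty_fullyFaithful]
  exact (Adjunction.Triple.mk adj₁ adj₂).fullyFaithfulEquiv.nonempty_congr
end
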